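/- Under the same stationarity assumption: ((n+2)(n+1+2B+2S) - 4S)·E[1², 0^n] = n(n+2Bb₀-1)·E[1², 0^{n-1}] + 2(1+2Bb₁)·E[1, 0^n] + (n+2)·2S·E[1², 0^{n+1}] for every n ≥ 1 (and for n = 0 with the first right-hand term absent). -/

import Mathlib

open MeasureTheory Real

/-!
Apply stationarity to `f(z) = z² (1 - z)ⁿ`. Computing `L̂ f` and rewriting each `z³`
as `z² - z² (1 - z)` (and `z (1 - z)ⁿ⁺¹` as `z (1 - z)ⁿ - z² (1 - z)ⁿ`) expresses `L̂ f` as a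
combination of the four monomials of the recursion; integrating against `π` gives it.
-/

theorem ContinuousOn.integrable_of_measure_compl_eq_zero {X E : Type*} [TopologicalSpace X]
    [T2Space X] [MeasurableSpace X] [OpensMeasurableSpace X] [NormedAddCommGroup E]
    {μ : Measure X} [IsFiniteMeasureOnCompacts μ] {K : Set X} {f : X → E}
    (hK : IsCompact K) (hμK : μ Kᶜ = 0) (hf : ContinuousOn f K) : Integrable f μ := by
  rw [← Measure.restrict_eq_self_of_ae_mem (ae_iff.mpr hμK)]
  exact hf.integrableOn_compact hK

/-- The operator `L̂` of the Wright–Fisher diffusion. -/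
noncomputable def wfGenerator (B b₀ b₁ S : ℝ) (f : ℝ → ℝ) (z : ℝ) : ℝ :=
  (B * b₁ * (1 - z) - B * b₀ * z + S * z * (1 - z)) * deriv f z
    + 1 / 2 * (z * (1 - z)) * deriv (deriv f) z

theorem hasDerivAt_pow_mul_one_sub_pow (a k : ℕ) (z : ℝ) :
    HasDerivAt (fun z : ℝ => z ^ a * (1 - z) ^ k)
      (a * z ^ (a - 1) * (1 - z) ^ k - k * z ^ a * (1 - z) ^ (k - 1)) z :=
  ((hasDerivAt_pow a z).fun_mul (((hasDerivAt_id' z).const_sub 1).fun_pow k)).congr_deriv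
    (by ring)

theorem deriv_sq_mul_one_sub_pow (n : ℕ) :
    deriv (fun z : ℝ => z ^ 2 * (1 - z) ^ n)
      = fun z : ℝ => 2 * (z * (1 - z) ^ n) - n * (z ^ 2 * (1 - z) ^ (n - 1)) := by
  funext z
  rw [(hasDerivAt_pow_mul_one_sub_pow 2 n z).deriv]
  norm_num
  ring

theorem deriv_deriv_sq_mul_one_sub_pow (n : ℕ) (z : ℝ) :
    deriv (deriv (fun z : ℝ => z ^ 2 * (1 - z) ^ n)) z
      = 2 * ((1 - z) ^ n - n * z * (1 - z) ^ (n - 1))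
        - n * (2 * z * (1 - z) ^ (n - 1) - (n - 1 : ℕ) * z ^ 2 * (1 - z) ^ (n - 1 - 1)) := by
  rw [deriv_sq_mul_one_sub_pow]
  convert (((hasDerivAt_pow_mul_one_sub_pow 1 n z).const_mul 2).fun_sub
    ((hasDerivAt_pow_mul_one_sub_pow 2 (n - 1) z).const_mul (n : ℝ))).deriv using 1
  · simp only [pow_one]
  · norm_num

theorem wfGenerator_sq_mul_one_sub_pow {B b₀ b₁ S : ℝ} (hsum : b₀ + b₁ = 1) (n : ℕ) (z : ℝ) :
    wfGenerator B b₀ b₁ S (fun z => z ^ 2 * (1 - z) ^ n) z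
      = (1 + 2 * B * b₁) * (z * (1 - z) ^ n)
        + n * (n + 2 * B * b₀ - 1) / 2 * (z ^ 2 * (1 - z) ^ (n - 1))
        + (n + 2) * S * (z ^ 2 * (1 - z) ^ (n + 1))
        - ((n + 2) * (n + 1 + 2 * B + 2 * S) - 4 * S) / 2 * (z ^ 2 * (1 - z) ^ n) := by
  obtain rfl : b₀ = 1 - b₁ := by linarith
  rw [wfGenerator, deriv_deriv_sq_mul_one_sub_pow, deriv_sq_mul_one_sub_pow]
  rcases n with _ | _ | k
  · simp only [Nat.cast_zero, pow_zero]; ring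
  · simp only [Nat.sub_self, Nat.cast_zero, pow_zero]; ring
  · simp only [Nat.add_sub_cancel]; push_cast; ring

-- At `n = 0` the truncated exponent `n - 1 = 0` is harmless: its coefficient `n` vanishes.
theorem moment_recursion_of_integral_wfGenerator_eq_zero {B b₀ b₁ S : ℝ} (hsum : b₀ + b₁ = 1)
    (μ : Measure ℝ) [IsFiniteMeasure μ] (hsupp : μ (Set.Icc (0 : ℝ) 1)ᶜ = 0) (n : ℕ)
    (hstat : ∫ z, wfGenerator B b₀ b₁ S (fun z => z ^ 2 * (1 - z) ^ n) z ∂μ = 0) :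
    ((n + 2) * (n + 1 + 2 * B + 2 * S) - 4 * S) * ∫ z, z ^ 2 * (1 - z) ^ n ∂μ
      = n * (n + 2 * B * b₀ - 1) * ∫ z, z ^ 2 * (1 - z) ^ (n - 1) ∂μ
        + 2 * (1 + 2 * B * b₁) * ∫ z, z * (1 - z) ^ n ∂μ
        + (n + 2) * (2 * S) * ∫ z, z ^ 2 * (1 - z) ^ (n + 1) ∂μ := by
  have hint (f : ℝ → ℝ) (hf : Continuous f) : Integrable f μ :=
    hf.continuousOn.integrable_of_measure_compl_eq_zero isCompact_Icc hsupp
  simp only [wfGenerator_sq_mul_one_sub_pow hsum] at hstat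
  rw [integral_sub, integral_add, integral_add, integral_const_mul, integral_const_mul,
    integral_const_mul, integral_const_mul] at hstat
  · linear_combination (-2 : ℝ) * hstat
  all_goals exact hint _ (by fun_prop)

theorem WF_moment_recursion_three_general (B b₀ b₁ S : ℝ) (hsum : b₀ + b₁ = 1)
    (μ : Measure ℝ) [IsProbabilityMeasure μ] (hsupp : μ (Set.Icc (0 : ℝ) 1)ᶜ = 0)
    (hstat : ∀ f : ℝ → ℝ, ContDiff ℝ 2 f →
      ∫ z, ((B * b₁ * (1 - z) - B * b₀ * z + S * z * (1 - z)) * deriv f z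
          + 1 / 2 * (z * (1 - z)) * deriv (deriv f) z) ∂μ = 0) :
    (∀ m : ℕ,
      ((((m : ℝ) + 1) + 2) * (((m : ℝ) + 1) + 1 + 2 * B + 2 * S) - 4 * S) *
          ∫ z, z ^ 2 * (1 - z) ^ (m + 1) ∂μ
        = ((m : ℝ) + 1) * (((m : ℝ) + 1) + 2 * B * b₀ - 1) * ∫ z, z ^ 2 * (1 - z) ^ m ∂μ
          + 2 * (1 + 2 * B * b₁) * ∫ z, z * (1 - z) ^ (m + 1) ∂μ
          + (((m : ℝ) + 1) + 2) * (2 * S) * ∫ z, z ^ 2 * (1 - z) ^ (m + 2) ∂μ) ∧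
    ((2 : ℝ) * (1 + 2 * B + 2 * S) - 4 * S) * ∫ z, z ^ 2 ∂μ
      = 2 * (1 + 2 * B * b₁) * ∫ z, z ∂μ
        + 2 * (2 * S) * ∫ z, z ^ 2 * (1 - z) ∂μ := by
  have recursion (n : ℕ) :=
    moment_recursion_of_integral_wfGenerator_eq_zero hsum μ hsupp n (hstat _ (by fun_prop))
  refine ⟨fun m => ?_, ?_⟩
  · simpa only [Nat.cast_add, Nat.cast_one, Nat.add_sub_cancel] using recursion (m + 1)
  · simpa using recursion 0

/-- Mixed moment recursion for a stationary distribution of the Wright-Fisher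
diffusion: `((n+2)(n+1+2B+2S) - 4S)·E[1²,0^n] = n(n+2Bb₀-1)·E[1²,0^{n-1}]
+ 2(1+2Bb₁)·E[1,0^n] + (n+2)·2S·E[1²,0^{n+1}]`, for `n ≥ 1`, and for `n = 0`
with the first right-hand term absent. -/
theorem WF_moment_recursion_three (B b₀ b₁ S : ℝ) (hB : 0 ≤ B) (hS : 0 ≤ S)
    (hb₀ : 0 ≤ b₀) (hb₁ : 0 ≤ b₁) (hsum : b₀ + b₁ = 1)
    (μ : Measure ℝ) [IsProbabilityMeasure μ] (hsupp : μ (Set.Icc (0 : ℝ) 1)ᶜ = 0)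
    (hstat : ∀ f : ℝ → ℝ, ContDiff ℝ 2 f →
      ∫ z, ((B * b₁ * (1 - z) - B * b₀ * z + S * z * (1 - z)) * deriv f z
          + 1 / 2 * (z * (1 - z)) * deriv (deriv f) z) ∂μ = 0) :
    (∀ m : ℕ,
      ((((m : ℝ) + 1) + 2) * (((m : ℝ) + 1) + 1 + 2 * B + 2 * S) - 4 * S) *
          ∫ z, z ^ 2 * (1 - z) ^ (m + 1) ∂μ
        = ((m : ℝ) + 1) * (((m : ℝ) + 1) + 2 * B * b₀ - 1) * ∫ z, z ^ 2 * (1 - z) ^ m ∂μ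
          + 2 * (1 + 2 * B * b₁) * ∫ z, z * (1 - z) ^ (m + 1) ∂μ
          + (((m : ℝ) + 1) + 2) * (2 * S) * ∫ z, z ^ 2 * (1 - z) ^ (m + 2) ∂μ) ∧
    ((2 : ℝ) * (1 + 2 * B + 2 * S) - 4 * S) * ∫ z, z ^ 2 ∂μ
      = 2 * (1 + 2 * B * b₁) * ∫ z, z ∂μ
        + 2 * (2 * S) * ∫ z, z ^ 2 * (1 - z) ∂μ :=
  WF_moment_recursion_three_general B b₀ b₁ S hsum μ hsupp hstat
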